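/- For every molecule node u of an AND-OR synthesis tree, the reaction number rn_V(u) equals the minimum, over all synthesis routes of u, of the route's total cost with respect to V (the minimum is attained since a molecule node has only finitely many synthesis routes, and at least one route exists because every internal molecule node has a nonempty list of reaction children). -/

import Mathlib

/-- AND-OR synthesis trees over a molecule type `M`: a molecule node is either a
frontier leaf carrying an element of `M`, or an internal node carrying a nonempty
list (encoded as head plus tail) of reaction children; a reaction node is a pair
of a real cost and a list of molecule children. -/
inductive Mol (M : Type) where
  | frontier : M → Mol M
  | node : (ℝ × List (Mol M)) → List (ℝ × List (Mol M)) → Mol M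

mutual
/-- Reaction number of a molecule node: `V m` at a frontier leaf, and the
minimum of the reaction numbers of the reaction children at an internal node. -/
noncomputable def rn {M : Type} (V : M → ℝ) : Mol M → ℝ
  | .frontier m => V m
  | .node r rs => (rs.attach.map fun ⟨R, _⟩ => rnR V R).foldr min (rnR V r)
termination_by u => sizeOf u
decreasing_by
  · simp; omega
  · have := List.sizeOf_lt_of_mem ‹R ∈ rs›; simp; omega

/-- Reaction number of a reaction node: its cost plus the sum of the reaction
numbers of its molecule children. -/
noncomputable def rnR {M : Type} (V : M → ℝ) : ℝ × List (Mol M) → ℝ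
  | (c, ms) => c + (ms.attach.map fun ⟨u, _⟩ => rn V u).sum
termination_by R => sizeOf R
decreasing_by
  · have := List.sizeOf_lt_of_mem ‹u ∈ ms›; simp; omega
end

/-- A synthesis route of a molecule node: the unique route of a frontier leaf is
the leaf itself; a route of an internal node selects one reaction child and a
route for each of that reaction's molecule children. -/
inductive Route {M : Type} : Mol M → Type
  | leaf (m : M) : Route (.frontier m)
  | step {r rs} (i : Fin (r :: rs : List (ℝ × List (Mol M))).length)
      (subs : ∀ j : Fin ((r :: rs).get i).2.length, Route (((r :: rs).get i).2.get j)) :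
      Route (.node r rs)

/-- Total cost of a route w.r.t. `V`: the sum of the costs of all selected
reaction nodes plus the sum of `V` over the molecules at the route's frontier
leaves. -/
noncomputable def routeCost {M : Type} (V : M → ℝ) : {u : Mol M} → Route u → ℝ
  | _, .leaf m => V m
  | _, .step (r := r) (rs := rs) i subs =>
      ((r :: rs).get i).1 + ∑ j, routeCost V (subs j)

/-!
Route costs satisfy the same recursion as the reaction number. A route of a reaction node
chooses a route of each molecule child independently, so the least cost of its routes is the
reaction cost plus the sum of the children's least route costs; the routes of an internal
molecule node are the routes through any one of its reaction children, so their least cost is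
the minimum over those children. Induction on the tree concludes.
-/

open Set

theorem List.isLeast_foldr_min {α : Type*} [LinearOrder α] (a : α) (l : List α) :
    IsLeast {x | x ∈ a :: l} (l.foldr min a) := by
  induction l with
  | nil => simp [isLeast_singleton]
  | cons b l ih =>
    refine ⟨?_, ?_⟩
    · rw [List.foldr_cons]
      rcases min_choice b (l.foldr min a) with h | h
      · simp [h]
      · rw [h]
        exact List.cons_subset_cons a (List.subset_cons_self b l) ih.1
    · rintro x (_ | ⟨_, _ | ⟨_, hx⟩⟩)
      · exact min_le_right _ _ |>.trans (ih.2 (List.mem_cons_self ..))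
      · exact min_le_left _ _
      · exact min_le_right _ _ |>.trans (ih.2 (List.mem_cons_of_mem _ hx))

theorem isLeast_range_sum {α ι : Type*} [AddCommMonoid α] [PartialOrder α]
    [IsOrderedAddMonoid α] [Fintype ι] {β : ι → Type*} {f : ∀ i, β i → α} {a : ι → α}
    (h : ∀ i, IsLeast (range (f i)) (a i)) :
    IsLeast (range fun g : ∀ i, β i => ∑ i, f i (g i)) (∑ i, a i) := by
  choose g hg using fun i => (h i).1
  exact ⟨⟨g, Finset.sum_congr rfl fun i _ => hg i⟩,
    by rintro _ ⟨g', rfl⟩; exact Finset.sum_le_sum fun i _ => (h i).2 ⟨g' i, rfl⟩⟩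

namespace Mol

variable {M : Type}

theorem sizeOf_lt_of_mem_reaction {r R : ℝ × List (Mol M)} {rs : List (ℝ × List (Mol M))}
    {u : Mol M} (hR : R ∈ r :: rs) (hu : u ∈ R.2) : sizeOf u < sizeOf (Mol.node r rs) := by
  have hu' := List.sizeOf_lt_of_mem hu
  have hR' := List.sizeOf_lt_of_mem hR
  obtain ⟨c, ms⟩ := R
  simp only [Prod.mk.sizeOf_spec, List.cons.sizeOf_spec, node.sizeOf_spec] at hu' hR' ⊢
  omega

@[elab_as_elim]
theorem induction_on_children {P : Mol M → Prop} (frontier : ∀ m, P (.frontier m))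
    (node : ∀ r rs, (∀ R ∈ r :: rs, ∀ u ∈ R.2, P u) → P (.node r rs)) : ∀ u, P u
  | .frontier m => frontier m
  | .node r rs => node r rs fun _ hR u hu =>
      have := sizeOf_lt_of_mem_reaction hR hu
      induction_on_children frontier node u
termination_by u => sizeOf u
decreasing_by assumption

end Mol

section ReactionNumber

variable {M : Type} (V : M → ℝ)

theorem rnR_eq_add_sum (R : ℝ × List (Mol M)) :
    rnR V R = R.1 + ∑ j : Fin R.2.length, rn V (R.2.get j) := by
  obtain ⟨c, ms⟩ := R
  simp only [rnR, ← List.sum_ofFn, List.map_subtype, List.unattach_attach, List.get_eq_getElem,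
    List.ofFn_getElem_eq_map]

theorem isLeast_rn_node (r : ℝ × List (Mol M)) (rs : List (ℝ × List (Mol M))) :
    IsLeast {x | x ∈ (r :: rs).map (rnR V)} (rn V (.node r rs)) := by
  simpa [rn] using List.isLeast_foldr_min (rnR V r) (rs.map (rnR V))

theorem isLeast_routeCost_reaction (R : ℝ × List (Mol M))
    (h : ∀ u ∈ R.2, IsLeast (range (routeCost V (u := u))) (rn V u)) :
    IsLeast (range fun subs : ∀ j, Route (R.2.get j) => R.1 + ∑ j, routeCost V (subs j))
      (rnR V R) := by
  rw [rnR_eq_add_sum]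
  have := isLeast_range_sum fun j => h _ (R.2.get_mem j)
  simpa [← range_comp, Function.comp_def] using (monotone_id.const_add R.1).map_isLeast this

theorem isLeast_routeCost_node (r : ℝ × List (Mol M)) (rs : List (ℝ × List (Mol M)))
    (h : ∀ R ∈ r :: rs, ∀ u ∈ R.2, IsLeast (range (routeCost V (u := u))) (rn V u)) :
    IsLeast (range (routeCost V (u := .node r rs))) (rn V (.node r rs)) := by
  have hreaction i := isLeast_routeCost_reaction V _ (h _ ((r :: rs).get_mem i))
  obtain ⟨hmem, hle⟩ := isLeast_rn_node V r rs
  constructor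
  · obtain ⟨R, hR, hRe⟩ := List.mem_map.1 hmem
    obtain ⟨i, rfl⟩ := List.mem_iff_get.1 hR
    obtain ⟨subs, hs⟩ := (hreaction i).1
    exact ⟨.step i subs, hs.trans hRe⟩
  · rintro _ ⟨rt, rfl⟩
    cases rt with | step i subs =>
    exact (hle (List.mem_map_of_mem ((r :: rs).get_mem i))).trans ((hreaction i).2 ⟨subs, rfl⟩)

end ReactionNumber

/-- for every molecule node `u`, the reaction number `rn V u` is the
minimum (attained, and over a nonempty collection) of the total costs of the
synthesis routes of `u`. -/
theorem rn_eq_min_routeCost {M : Type} (V : M → ℝ) (u : Mol M) :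
    IsLeast {x : ℝ | ∃ rt : Route u, routeCost V rt = x} (rn V u) := by
  induction u using Mol.induction_on_children with
  | frontier m =>
    rw [rn]
    exact ⟨⟨.leaf m, rfl⟩, by rintro _ ⟨⟨⟩, rfl⟩; rfl⟩
  | node r rs ih => exact isLeast_routeCost_node V r rs ih
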